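/- arXiv:1311.1398 — 2 statements merged into one kernel-verified Lean document; each statement's English description precedes it below -/
import Mathlib

section
/- For every integer k ≥ 2, there exists a natural number n ≥ 1 such that n/π(n) = k (in particular, π(n) divides n), where π(n) denotes the number of primes not exceeding n. -/
/-!
Chebyshev's bound `π(x) ≤ (log 4 + ε) x / log x` gives `π(n) = o(n)`, so `k π(n) ≤ n` for large
`n`, while `k π(2) = k ≥ 2`. A monotone map `g : ℕ → ℕ` with `a ≤ g a` and `g b ≤ b` has a fixed
point `≥ a` (it can overtake the diagonal only by stepping onto it); applied to `g = k π` this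
gives `n = k π(n)`.
-/

open Filter

theorem Nat.exists_isFixedPt_of_monotone {g : ℕ → ℕ} (hg : Monotone g) {a b : ℕ}
    (ha : a ≤ g a) (hab : a ≤ b) (hb : g b ≤ b) : ∃ n, a ≤ n ∧ Function.IsFixedPt g n := by
  induction b, hab using Nat.le_induction with
  | base => exact ⟨a, le_rfl, le_antisymm hb ha⟩
  | succ b hab ih =>
    by_cases hgb : g b ≤ b
    · exact ih hgb
    · exact ⟨b + 1, by omega, le_antisymm hb ((not_le.mp hgb).trans_le (hg b.le_succ))⟩

theorem Nat.primeCounting_isLittleO :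
    (fun n : ℕ ↦ (n.primeCounting : ℝ)) =o[atTop] (fun n ↦ (n : ℝ)) := by
  refine Asymptotics.isLittleO_iff.mpr fun c hc ↦ ?_
  have hlog : ∀ᶠ n : ℕ in atTop, (Real.log 4 + 1) / c ≤ Real.log n :=
    (Real.tendsto_log_atTop.comp tendsto_natCast_atTop_atTop).eventually_ge_atTop _
  have hcheb :=
    tendsto_natCast_atTop_atTop.eventually (Chebyshev.eventually_primeCounting_le one_pos)
  filter_upwards [hlog, hcheb, eventually_gt_atTop 1] with n hlog hcheb hn
  have hlogpos : 0 < Real.log n := Real.log_pos (by exact_mod_cast hn)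
  rw [Nat.floor_natCast] at hcheb
  rw [div_le_iff₀ hc] at hlog
  rw [Real.norm_natCast, Real.norm_natCast]
  calc (n.primeCounting : ℝ) ≤ (Real.log 4 + 1) * n / Real.log n := hcheb
    _ ≤ c * n := by
      rw [div_le_iff₀ hlogpos]
      nlinarith [n.cast_nonneg (α := ℝ)]

theorem Nat.eventually_mul_primeCounting_le (k : ℕ) :
    ∀ᶠ n : ℕ in atTop, k * n.primeCounting ≤ n := by
  filter_upwards [Nat.primeCounting_isLittleO.bound (inv_pos.mpr (k.cast_add_one_pos (α := ℝ)))]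
    with n hn
  rw [Real.norm_natCast, Real.norm_natCast, le_inv_mul_iff₀ k.cast_add_one_pos] at hn
  exact (Nat.mul_le_mul_right _ k.le_succ).trans (by exact_mod_cast hn)

theorem stmt_0 :
    ∀ k : ℕ, 2 ≤ k → ∃ n : ℕ, 1 ≤ n ∧ n.primeCounting ∣ n ∧ n / n.primeCounting = k := by
  intro k hk
  obtain ⟨b, hb2, hb⟩ :=
    ((eventually_ge_atTop 2).and (Nat.eventually_mul_primeCounting_le k)).exists
  have hk2 : 2 ≤ k * Nat.primeCounting 2 := by
    rwa [show Nat.primeCounting 2 = 1 by decide, mul_one]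
  obtain ⟨n, hn2, hfix⟩ := Nat.exists_isFixedPt_of_monotone
    (Nat.monotone_primeCounting.const_mul' k) hk2 hb2 hb
  have hpos : 0 < n.primeCounting :=
    Nat.pos_of_ne_zero (Nat.primeCounting_eq_zero_iff.not.mpr (by omega))
  exact ⟨n, by omega, Dvd.intro_left k hfix, Nat.div_eq_of_eq_mul_left hpos hfix.symm⟩
end

section
/- There are infinitely many natural numbers n such that π(n) divides n, where π(n) denotes the number of primes not exceeding n. -/
/-!
Chebyshev's bound `π(n) = O(n / log n)` gives, for every `k`, `k π(n) < n` for all large `n`,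
whereas `k ≤ k π(k)` once `k ≥ 2`. Since `π` is monotone, at the last `m` before the crossover
`m ≤ k π(m) ≤ k π(m + 1) < m + 1`, so `m = k π(m)`. Letting `k` grow gives infinitely many `m`.
-/

open Filter Real
open scoped Nat.Prime

lemma Monotone.exists_mul_eq_self {g : ℕ → ℕ} (hg : Monotone g) {k a : ℕ} (ha : a ≤ k * g a)
    (hlt : ∀ᶠ n in atTop, k * g n < n) : ∃ m, a ≤ m ∧ k * g m = m := by
  have hex : ∃ m, a ≤ m ∧ k * g (m + 1) < m + 1 := by
    obtain ⟨N, hN⟩ := eventually_atTop.mp hlt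
    exact ⟨max a N, le_max_left _ _, hN _ (by omega)⟩
  classical
  set m := Nat.find hex
  obtain ⟨ham, hcross⟩ : a ≤ m ∧ k * g (m + 1) < m + 1 := Nat.find_spec hex
  have hle : m ≤ k * g m := by
    rcases ham.eq_or_lt with hm | hm
    · exact hm ▸ ha
    · have hbefore := Nat.find_min hex (show m - 1 < m by omega)
      rw [Nat.sub_add_cancel (by omega)] at hbefore
      omega
  have hmono : k * g m ≤ k * g (m + 1) := Nat.mul_le_mul_left k (hg m.le_succ)
  exact ⟨m, ham, by omega⟩

lemma eventually_mul_primeCounting_lt (k : ℕ) : ∀ᶠ n in atTop, k * π n < n := by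
  have hcheb := tendsto_natCast_atTop_atTop.eventually
    (Chebyshev.eventually_primeCounting_le (ε := 1) one_pos)
  have hlog := (tendsto_log_atTop.comp tendsto_natCast_atTop_atTop).eventually_gt_atTop
    (k * (log 4 + 1))
  filter_upwards [hcheb, hlog, eventually_gt_atTop 0] with n hπ hlogn hn
  rw [Nat.floor_natCast] at hπ
  simp only [Function.comp_apply] at hlogn
  have hlogpos : 0 < log n := lt_of_le_of_lt (by positivity) hlogn
  have hnpos : (0 : ℝ) < n := mod_cast hn
  suffices (k : ℝ) * π n < n by exact_mod_cast this
  calc (k : ℝ) * π n ≤ k * ((log 4 + 1) * n / log n) := by gcongr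
    _ = k * (log 4 + 1) / log n * n := by ring
    _ < 1 * n := by
      gcongr
      exact (div_lt_one hlogpos).mpr hlogn
    _ = n := one_mul _

theorem stmt_1 : {n : ℕ | n.primeCounting ∣ n}.Infinite := by
  refine Set.infinite_of_forall_exists_gt fun b ↦ ?_
  set k := b + 2
  have hk : k ≤ k * π k := Nat.le_mul_of_pos_right k
    (Nat.pos_of_ne_zero (by rw [ne_eq, Nat.primeCounting_eq_zero_iff]; omega))
  obtain ⟨m, hkm, hm⟩ :=
    Nat.monotone_primeCounting.exists_mul_eq_self hk (eventually_mul_primeCounting_lt k)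
  exact ⟨m, ⟨k, by rw [mul_comm, hm]⟩, by omega⟩
end
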